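/- arXiv:2512.10204 — 2 statements merged into one kernel-verified Lean document; each statement's English description precedes it below -/
import Mathlib

section
/- Let V be a real Hilbert space, let Ψ : V → ℝ be locally Lipschitz continuous, and let α ≥ 0. Then the condition Ψ⁰(v₁; v₂ − v₁) + Ψ⁰(v₂; v₁ − v₂) ≤ α‖v₁ − v₂‖² for all v₁, v₂ ∈ V holds if and only if the functional v ↦ Ψ(v) + (α/2)‖v‖² is convex on V. -/
/-!
Adding a strictly differentiable function to `Ψ` shifts its Clarke derivative by the derivative,
and `⟪v₁, v₂ - v₁⟫ + ⟪v₂, v₁ - v₂⟫ = -‖v₁ - v₂‖²`, so the condition on `Ψ` says exactly that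
`g = Ψ + (α / 2)‖·‖²` satisfies `g⁰(v₁; v₂ - v₁) + g⁰(v₂; v₁ - v₂) ≤ 0`.
For a convex `g` both terms are bounded by chords.
Conversely, on a line `t ↦ g (x + t • d)` this inequality and positive homogeneity give
`g⁰(x + s • d; d) ≤ -g⁰(x + t • d; -d)` for `s < t`; since Clarke derivatives dominate Dini
derivatives, the mean value inequality bounds the slope of the line to the left of `b` by
`-g⁰(x + b • d; -d)` and to the right by `g⁰(x + b • d; d)`, and
`0 ≤ g⁰(u; d) + g⁰(u; -d)` puts these bounds in the right order.
-/

open Filter Topology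

/-- The Clarke (generalized) directional derivative of `f` at `u` in direction `v`. -/
noncomputable def clarkeDeriv {X : Type*} [NormedAddCommGroup X] [NormedSpace ℝ X]
    (f : X → ℝ) (u v : X) : ℝ :=
  Filter.limsup (fun p : X × ℝ => (f (p.1 + p.2 • v) - f p.1) / p.2)
    ((𝓝 u) ×ˢ 𝓝[>] (0:ℝ))

open Set

theorem prod_nhdsWithin_le_nhds {Y Z : Type*} [TopologicalSpace Y] [TopologicalSpace Z] (y : Y)
    (s : Set Z) (z : Z) : 𝓝 y ×ˢ 𝓝[s] z ≤ 𝓝 (y, z) := by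
  rw [nhds_prod_eq]
  exact prod_mono le_rfl nhdsWithin_le_nhds

theorem convexOn_univ_of_forall_convexOn_line {𝕜 E β : Type*} [CommRing 𝕜] [PartialOrder 𝕜]
    [AddCommGroup E] [Module 𝕜 E] [AddCommMonoid β] [PartialOrder β] [Module 𝕜 β] {f : E → β}
    (h : ∀ x d : E, ConvexOn 𝕜 univ fun t : 𝕜 => f (x + t • d)) : ConvexOn 𝕜 univ f := by
  refine ⟨convex_univ, fun p _ q _ a b ha hb hab => ?_⟩
  have := (h p (q - p)).2 (mem_univ 0) (mem_univ 1) ha hb hab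
  simp only [smul_eq_mul, mul_zero, mul_one, zero_add, zero_smul, add_zero, one_smul,
    add_sub_cancel] at this
  rwa [show a • p + b • q = p + b • (q - p) by rw [eq_sub_of_add_eq hab]; module]

section Clarke

variable {X : Type*} [NormedAddCommGroup X] [NormedSpace ℝ X] {f g : X → ℝ} {u v : X}

noncomputable def diffQuot (f : X → ℝ) (v : X) (p : X × ℝ) : ℝ :=
  (f (p.1 + p.2 • v) - f p.1) / p.2

theorem clarkeDeriv_eq_limsup_diffQuot (f : X → ℝ) (u v : X) :
    clarkeDeriv f u v = limsup (diffQuot f v) (𝓝 u ×ˢ 𝓝[>] 0) := rfl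

theorem LocallyLipschitz.eventually_abs_diffQuot_le (hf : LocallyLipschitz f) (u v : X) :
    ∃ C, ∀ᶠ p in 𝓝 u ×ˢ 𝓝[>] 0, |diffQuot f v p| ≤ C := by
  obtain ⟨L, s, hs, hL⟩ := hf u
  have hshift : Tendsto (fun p : X × ℝ => p.1 + p.2 • v) (𝓝 (u, 0)) (𝓝 u) :=
    (by fun_prop : Continuous fun p : X × ℝ => p.1 + p.2 • v).tendsto' _ _ (by simp)
  have hfst : Tendsto (fun p : X × ℝ => p.1) (𝓝 (u, 0)) (𝓝 u) := continuous_fst.tendsto _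
  refine ⟨L * ‖v‖, ?_⟩
  filter_upwards [prod_nhdsWithin_le_nhds u _ _ (hfst.eventually_mem hs),
    prod_nhdsWithin_le_nhds u _ _ (hshift.eventually_mem hs),
    tendsto_snd.eventually self_mem_nhdsWithin] with p hp hpv (hpos : 0 < p.2)
  have := hL.dist_le_mul _ hpv _ hp
  rw [Real.dist_eq, dist_eq_norm, add_sub_cancel_left, norm_smul, Real.norm_of_nonneg hpos.le]
    at this
  rw [diffQuot, abs_div, abs_of_pos hpos, div_le_iff₀ hpos]
  linarith

theorem LocallyLipschitz.isBoundedUnder_le_diffQuot (hf : LocallyLipschitz f) (u v : X) :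
    IsBoundedUnder (· ≤ ·) (𝓝 u ×ˢ 𝓝[>] 0) (diffQuot f v) :=
  let ⟨C, hC⟩ := hf.eventually_abs_diffQuot_le u v
  ⟨C, eventually_map.2 <| hC.mono fun _ h => le_of_abs_le h⟩

theorem LocallyLipschitz.isBoundedUnder_ge_diffQuot (hf : LocallyLipschitz f) (u v : X) :
    IsBoundedUnder (· ≥ ·) (𝓝 u ×ˢ 𝓝[>] 0) (diffQuot f v) :=
  let ⟨C, hC⟩ := hf.eventually_abs_diffQuot_le u v
  ⟨-C, eventually_map.2 <| hC.mono fun _ h => neg_le_of_abs_le h⟩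

theorem LocallyLipschitz.eventually_diffQuot_lt (hf : LocallyLipschitz f) {r : ℝ}
    (h : clarkeDeriv f u v < r) : ∀ᶠ p in 𝓝 u ×ˢ 𝓝[>] 0, diffQuot f v p < r :=
  eventually_lt_of_limsup_lt h (hf.isBoundedUnder_le_diffQuot u v)

theorem LocallyLipschitz.clarkeDeriv_add_clarkeDeriv_neg_nonneg (hf : LocallyLipschitz f)
    (u v : X) : 0 ≤ clarkeDeriv f u v + clarkeDeriv f u (-v) := by
  by_contra! hneg
  obtain ⟨r, hr₁, hr₂⟩ := exists_between (lt_neg_iff_add_neg.2 hneg)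
  have h₁ := hf.eventually_diffQuot_lt hr₁
  have h₂ := hf.eventually_diffQuot_lt (lt_neg_of_lt_neg hr₂)
  have hbase : Tendsto (fun t : ℝ => (u, t)) (𝓝[>] 0) (𝓝 u ×ˢ 𝓝[>] 0) :=
    tendsto_const_nhds.prodMk tendsto_id
  -- along this path the quotient in direction `-v` is minus the quotient in direction `v`
  have hmoving : Tendsto (fun t : ℝ => (u + t • v, t)) (𝓝[>] 0) (𝓝 u ×ˢ 𝓝[>] 0) := by
    refine Tendsto.prodMk ?_ tendsto_id
    exact ((by fun_prop : Continuous fun t : ℝ => u + t • v).tendsto' 0 u (by simp)).mono_left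
      nhdsWithin_le_nhds
  obtain ⟨t, ht₁, ht₂⟩ := ((hbase.eventually h₁).and (hmoving.eventually h₂)).exists
  simp only [diffQuot, smul_neg, add_neg_cancel_right] at ht₁ ht₂
  have : (f u - f (u + t • v)) / t = -((f (u + t • v) - f u) / t) := by ring
  linarith

theorem LocallyLipschitz.clarkeDeriv_smul (hf : LocallyLipschitz f) (u v : X) {c : ℝ}
    (hc : 0 < c) : clarkeDeriv f u (c • v) = c * clarkeDeriv f u v := by
  set m : X × ℝ → X × ℝ := Prod.map id (c * ·)
  have hm : map m (𝓝 u ×ˢ 𝓝[>] 0) = 𝓝 u ×ˢ 𝓝[>] 0 := by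
    have := (Homeomorph.mulLeft₀ c hc.ne').isEmbedding.map_nhdsWithin_eq (Ioi 0) 0
    simp only [Homeomorph.coe_mulLeft₀, image_mul_left_Ioi hc, mul_zero] at this
    rw [← prod_map_map_eq', map_id, this]
  have hq : diffQuot f (c • v) = fun p => c * diffQuot f v (m p) := by
    funext p
    rcases eq_or_ne p.2 0 with h | h
    · simp [diffQuot, m, h]
    · simp only [diffQuot, m, Prod.map, id, smul_smul, mul_comm p.2 c]
      field_simp
  have hbdd : IsBoundedUnder (· ≤ ·) (𝓝 u ×ˢ 𝓝[>] 0) (diffQuot f v ∘ m) := by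
    rw [IsBoundedUnder, ← map_map, hm]; exact hf.isBoundedUnder_le_diffQuot u v
  have hcobdd : IsCoboundedUnder (· ≤ ·) (𝓝 u ×ˢ 𝓝[>] 0) (diffQuot f v ∘ m) := by
    apply IsBoundedUnder.isCoboundedUnder_le
    rw [IsBoundedUnder, ← map_map, hm]; exact hf.isBoundedUnder_ge_diffQuot u v
  calc clarkeDeriv f u (c • v)
      = limsup (fun p => c * (diffQuot f v ∘ m) p) (𝓝 u ×ˢ 𝓝[>] 0) := by
        rw [clarkeDeriv_eq_limsup_diffQuot, hq]; rfl
    _ = c * limsup (diffQuot f v) (map m (𝓝 u ×ˢ 𝓝[>] 0)) :=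
        ((monotone_mul_left_of_nonneg hc.le).map_limsup_of_continuousAt _
          (continuous_const_mul c).continuousAt hbdd hcobdd).symm
    _ = c * clarkeDeriv f u v := by rw [hm, clarkeDeriv_eq_limsup_diffQuot]

theorem HasStrictFDerivAt.tendsto_diffQuot {g' : X →L[ℝ] ℝ} (hg : HasStrictFDerivAt g g' u)
    (v : X) : Tendsto (diffQuot g v) (𝓝 u ×ˢ 𝓝[>] 0) (𝓝 (g' v)) := by
  have hpair : Tendsto (fun p : X × ℝ => (p.1 + p.2 • v, p.1)) (𝓝 u ×ˢ 𝓝[>] 0) (𝓝 (u, u)) :=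
    ((by fun_prop : Continuous fun p : X × ℝ => (p.1 + p.2 • v, p.1)).tendsto' (u, 0) (u, u)
      (by simp)).mono_left (prod_nhdsWithin_le_nhds u _ _)
  have hsmall := (hasStrictFDerivAt_iff_isLittleO.1 hg).comp_tendsto hpair
  simp only [Function.comp_def, add_sub_cancel_left] at hsmall
  have hlin : (fun p : X × ℝ => p.2 • v) =O[𝓝 u ×ˢ 𝓝[>] 0] (fun p => p.2) :=
    Asymptotics.IsBigO.of_bound ‖v‖ (Eventually.of_forall fun p => by
      rw [norm_smul, mul_comm])
  rw [← tendsto_sub_nhds_zero_iff]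
  refine ((hsmall.trans_isBigO hlin).tendsto_div_nhds_zero).congr' ?_
  filter_upwards [tendsto_snd.eventually self_mem_nhdsWithin] with p (hp : 0 < p.2)
  rw [diffQuot, map_smul, smul_eq_mul]
  field_simp

theorem LocallyLipschitz.clarkeDeriv_add_of_hasStrictFDerivAt (hf : LocallyLipschitz f)
    {g' : X →L[ℝ] ℝ} (hg : HasStrictFDerivAt g g' u) (v : X) :
    clarkeDeriv (fun x => f x + g x) u v = clarkeDeriv f u v + g' v := by
  have hsum : diffQuot (fun x => f x + g x) v = diffQuot f v + diffQuot g v := by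
    funext p
    simp only [diffQuot, Pi.add_apply]
    ring
  have hg' := hg.tendsto_diffQuot v
  have hub := hf.isBoundedUnder_le_diffQuot u v
  have hlb := hf.isBoundedUnder_ge_diffQuot u v
  rw [clarkeDeriv_eq_limsup_diffQuot, clarkeDeriv_eq_limsup_diffQuot, hsum]
  refine le_antisymm ?_ ?_
  · calc limsup (diffQuot f v + diffQuot g v) (𝓝 u ×ˢ 𝓝[>] 0)
        ≤ limsup (diffQuot f v) (𝓝 u ×ˢ 𝓝[>] 0) + limsup (diffQuot g v) (𝓝 u ×ˢ 𝓝[>] 0) :=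
          limsup_add_le hlb hub hg'.isCoboundedUnder_le hg'.isBoundedUnder_le
      _ = _ := by rw [hg'.limsup_eq]
  · calc limsup (diffQuot f v) (𝓝 u ×ˢ 𝓝[>] 0) + g' v
        = limsup (diffQuot f v) (𝓝 u ×ˢ 𝓝[>] 0) + liminf (diffQuot g v) (𝓝 u ×ˢ 𝓝[>] 0) := by
          rw [hg'.liminf_eq]
      _ ≤ _ := le_limsup_add hub hlb.isCoboundedUnder_le hg'.isBoundedUnder_le
          hg'.isBoundedUnder_ge

theorem ConvexOn.clarkeDeriv_le (hconv : ConvexOn ℝ univ f) (hf : LocallyLipschitz f)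
    (u v : X) : clarkeDeriv f u v ≤ f (u + v) - f u := by
  have hlim : Tendsto (fun p : X × ℝ => f (p.1 + v) - f p.1) (𝓝 u ×ˢ 𝓝[>] 0)
      (𝓝 (f (u + v) - f u)) :=
    (((hf.continuous.comp (continuous_add_const v)).sub hf.continuous).tendsto u).comp
      tendsto_fst
  have hchord : ∀ᶠ p in 𝓝 u ×ˢ 𝓝[>] 0, diffQuot f v p ≤ f (p.1 + v) - f p.1 := by
    filter_upwards [tendsto_snd.eventually (Ioc_mem_nhdsGT zero_lt_one)] with p ⟨hp₀, hp₁⟩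
    have h := hconv.2 (mem_univ p.1) (mem_univ (p.1 + v)) (sub_nonneg.2 hp₁) hp₀.le
      (sub_add_cancel 1 p.2)
    rw [show (1 - p.2) • p.1 + p.2 • (p.1 + v) = p.1 + p.2 • v by module, smul_eq_mul,
      smul_eq_mul] at h
    rw [diffQuot, div_le_iff₀ hp₀]
    linarith
  calc clarkeDeriv f u v ≤ limsup (fun p : X × ℝ => f (p.1 + v) - f p.1) (𝓝 u ×ˢ 𝓝[>] 0) :=
        limsup_le_limsup hchord (hf.isBoundedUnder_ge_diffQuot u v).isCoboundedUnder_le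
          hlim.isBoundedUnder_le
    _ = f (u + v) - f u := hlim.limsup_eq

theorem LocallyLipschitz.sub_le_of_clarkeDeriv_le (hf : LocallyLipschitz f) (x d : X)
    {a b c : ℝ} (hab : a ≤ b) (hc : ∀ τ ∈ Ico a b, clarkeDeriv f (x + τ • d) d ≤ c) :
    f (x + b • d) - f (x + a • d) ≤ c * (b - a) := by
  set φ : ℝ → ℝ := fun t => f (x + t • d)
  have hφ : Continuous φ := hf.continuous.comp (by fun_prop)
  have hB : ∀ t, HasDerivAt (fun t => φ a + c * (t - a)) c t := fun t => by
    simpa using (((hasDerivAt_id t).sub_const a).const_mul c).const_add (φ a)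
  have hslope : ∀ τ ∈ Ico a b, ∀ r, c < r → ∃ᶠ z in 𝓝[>] τ, slope φ τ z < r := by
    intro τ hτ r hr
    have hpath : Tendsto (fun z => (x + τ • d, -τ + z)) (𝓝[>] τ) (𝓝 (x + τ • d) ×ˢ 𝓝[>] 0) :=
      tendsto_const_nhds.prodMk (map_add_left_nhdsGT.trans (by rw [neg_add_cancel])).le
    refine (hpath.eventually (hf.eventually_diffQuot_lt ((hc τ hτ).trans_lt hr))).frequently.mono
      fun z hz => ?_
    rw [diffQuot, add_assoc, ← add_smul, add_neg_cancel_left] at hz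
    rw [slope_def_field, sub_eq_neg_add z τ]
    exact hz
  have := image_le_of_liminf_slope_right_le_deriv_boundary hφ.continuousOn (by simp)
    (by fun_prop) (fun t _ => (hB t).hasDerivWithinAt) hslope (right_mem_Icc.2 hab)
  simp only [φ] at this
  linarith

theorem LocallyLipschitz.convexOn_univ_iff_clarkeDeriv (hf : LocallyLipschitz f) :
    ConvexOn ℝ univ f ↔ ∀ x y, clarkeDeriv f x (y - x) + clarkeDeriv f y (x - y) ≤ 0 := by
  refine ⟨fun hconv x y => ?_, fun hmono => ?_⟩
  · have h₁ := hconv.clarkeDeriv_le hf x (y - x)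
    have h₂ := hconv.clarkeDeriv_le hf y (x - y)
    rw [add_sub_cancel] at h₁ h₂
    linarith
  have hline : ∀ x d : X, ∀ s t : ℝ, s < t →
      clarkeDeriv f (x + s • d) d + clarkeDeriv f (x + t • d) (-d) ≤ 0 := by
    intro x d s t hst
    have h := hmono (x + s • d) (x + t • d)
    rw [show x + t • d - (x + s • d) = (t - s) • d by module,
      show x + s • d - (x + t • d) = (t - s) • -d by module,
      hf.clarkeDeriv_smul _ _ (sub_pos.2 hst), hf.clarkeDeriv_smul _ _ (sub_pos.2 hst),
      ← mul_add] at h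
    exact nonpos_of_mul_nonpos_right h (sub_pos.2 hst)
  refine convexOn_univ_of_forall_convexOn_line fun x d =>
    convexOn_of_slope_mono_adjacent convex_univ fun {a b c} _ _ hab hbc => ?_
  have hleft : f (x + b • d) - f (x + a • d) ≤ -clarkeDeriv f (x + b • d) (-d) * (b - a) :=
    hf.sub_le_of_clarkeDeriv_le x d hab.le fun τ hτ => by linarith [hline x d τ b hτ.2]
  have hright : clarkeDeriv f (x + b • d) d * (c - b) ≤ f (x + c • d) - f (x + b • d) := by
    have := hf.sub_le_of_clarkeDeriv_le x (-d) (c := -clarkeDeriv f (x + b • d) d)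
      (neg_le_neg hbc.le) fun τ hτ => by
      have := hline x (-d) τ (-b) hτ.2
      rw [neg_neg, neg_smul_neg] at this
      linarith
    rw [neg_smul_neg, neg_smul_neg, sub_neg_eq_add, neg_add_eq_sub] at this
    linarith
  calc (f (x + b • d) - f (x + a • d)) / (b - a)
      ≤ -clarkeDeriv f (x + b • d) (-d) := (div_le_iff₀ (sub_pos.2 hab)).2 hleft
    _ ≤ clarkeDeriv f (x + b • d) d := by
        linarith [hf.clarkeDeriv_add_clarkeDeriv_neg_nonneg (x + b • d) d]
    _ ≤ (f (x + c • d) - f (x + b • d)) / (c - b) := (le_div_iff₀ (sub_pos.2 hbc)).2 hright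

end Clarke

open scoped RealInnerProductSpace in
theorem inner_sub_add_inner_sub {V : Type*} [NormedAddCommGroup V] [InnerProductSpace ℝ V]
    (x y : V) : ⟪x, y - x⟫ + ⟪y, x - y⟫ = -‖x - y‖ ^ 2 := by
  rw [← real_inner_self_eq_norm_sq]
  simp only [inner_sub_left, inner_sub_right, real_inner_comm x y]
  ring

open scoped RealInnerProductSpace in
theorem stmt5_general {V : Type*} [NormedAddCommGroup V] [InnerProductSpace ℝ V]
    (Ψ : V → ℝ)
    (hΨlip : ∀ u : V, ∃ (L : NNReal) (s : Set V), s ∈ 𝓝 u ∧ LipschitzOnWith L Ψ s)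
    (α : ℝ) :
    (∀ v₁ v₂ : V,
        clarkeDeriv Ψ v₁ (v₂ - v₁) + clarkeDeriv Ψ v₂ (v₁ - v₂) ≤ α * ‖v₁ - v₂‖ ^ 2) ↔
    ConvexOn ℝ Set.univ (fun v : V => Ψ v + (α / 2) * ‖v‖ ^ 2) := by
  have hΨ : LocallyLipschitz Ψ := hΨlip
  have hg : LocallyLipschitz fun v : V => Ψ v + α / 2 * ‖v‖ ^ 2 :=
    hΨ.add ((contDiff_norm_sq ℝ).const_smul (α / 2)).locallyLipschitz
  have hderiv : ∀ u v : V, clarkeDeriv (fun v => Ψ v + α / 2 * ‖v‖ ^ 2) u v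
      = clarkeDeriv Ψ u v + α * ⟪u, v⟫ := fun u v => by
    rw [hΨ.clarkeDeriv_add_of_hasStrictFDerivAt ((hasStrictFDerivAt_norm_sq u).const_mul (α / 2))]
    simp only [smul_apply, coe_innerSL_apply, nsmul_eq_mul, Nat.cast_ofNat,
      smul_eq_mul, add_right_inj]
    ring
  rw [hg.convexOn_univ_iff_clarkeDeriv]
  refine forall₂_congr fun v₁ v₂ => ?_
  have hquad : α * ⟪v₁, v₂ - v₁⟫ + α * ⟪v₂, v₁ - v₂⟫ = -(α * ‖v₁ - v₂‖ ^ 2) := by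
    rw [← mul_add, inner_sub_add_inner_sub, mul_neg]
  rw [hderiv, hderiv]
  constructor <;> intro h <;> linarith

theorem stmt5 {V : Type*} [NormedAddCommGroup V] [InnerProductSpace ℝ V] [CompleteSpace V]
    (Ψ : V → ℝ)
    (hΨlip : ∀ u : V, ∃ (L : NNReal) (s : Set V), s ∈ 𝓝 u ∧ LipschitzOnWith L Ψ s)
    (α : ℝ) (hα : 0 ≤ α) :
    (∀ v₁ v₂ : V,
        clarkeDeriv Ψ v₁ (v₂ - v₁) + clarkeDeriv Ψ v₂ (v₁ - v₂) ≤ α * ‖v₁ - v₂‖ ^ 2) ↔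
    ConvexOn ℝ Set.univ (fun v : V => Ψ v + (α / 2) * ‖v‖ ^ 2) :=
  stmt5_general Ψ hΨlip α
end

section
/- Assume the abstract VHI data hypotheses with α_Ψ < m_A. Then there exists a unique u ∈ K such that ⟨Au, v − u⟩ + Φ(v) − Φ(u) + Ψ⁰(u; v − u) ≥ ⟨f, v − u⟩ for all v ∈ K. -/
/-!
Put `Ψ̃ = Ψ + (α/2)‖·‖²`. The relaxed monotonicity of `Ψ⁰` says that `Ψ̃⁰` is monotone, and a
locally Lipschitz function with monotone Clarke derivative is convex (by Lebourg's mean value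
theorem on each line). So `B = A - α⟪·, ·⟫` is Lipschitz and strongly monotone with constant
`m_A - α > 0`, and `φ = Φ + Ψ̃` is convex and continuous; the variational inequality
`⟨B u - f, v - u⟩ + φ v - φ u ≥ 0` on `K` then has a solution, the fixed point of the contraction
`z ↦ prox_{ρφ}(z - ρ R (B z - f))` (`R` the Riesz isomorphism, `ρ = m / L²`). Difference
quotients of `Ψ̃` along segments in `K` give `Ψ̃⁰(u; v - u) ≥ ⟨f - B u, v - u⟩ - (Φ v - Φ u)`,
and `Ψ̃⁰(u; w) ≤ Ψ⁰(u; w) + α⟪u, w⟫` turns this into the hemivariational inequality. Adding the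
inequalities for two solutions gives `(m_A - α)‖u₁ - u₂‖² ≤ 0`.
-/

open Filter Topology

open Set

section Convex

variable {E : Type*} [NormedAddCommGroup E] [NormedSpace ℝ E] {φ : E → ℝ}

theorem ConvexOn.le_add_smul_sub (hφ : ConvexOn ℝ univ φ) (x y : E) {t : ℝ}
    (ht : t ∈ Icc (0 : ℝ) 1) : φ (x + t • (y - x)) ≤ φ x + t * (φ y - φ x) := by
  calc φ (x + t • (y - x)) = φ ((1 - t) • x + t • y) := by congr 1; module
    _ ≤ (1 - t) • φ x + t • φ y :=
      hφ.2 (mem_univ x) (mem_univ y) (sub_nonneg.2 ht.2) ht.1 (sub_add_cancel 1 t)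
    _ = φ x + t * (φ y - φ x) := by simp only [smul_eq_mul]; ring

theorem ConvexOn.exists_sub_mul_norm_sub_le (hφ : ConvexOn ℝ univ φ) {w : E}
    (hw : ContinuousAt φ w) : ∃ c d : ℝ, 0 ≤ d ∧ ∀ v, c - d * ‖v - w‖ ≤ φ v := by
  obtain ⟨δ, hδ, hball⟩ := Metric.continuousAt_iff.1 hw 1 one_pos
  refine ⟨φ w - 1 / δ, 1 / δ, by positivity, fun v => ?_⟩
  -- `w` lies on the segment from `v` to a point `z` of the `δ`-ball around `w`
  set s := δ / (‖v - w‖ + 1)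
  have hs : 0 < s := by positivity
  set z := w - s • (v - w)
  have hz : φ z < φ w + 1 := by
    have hzδ : dist z w < δ := by
      rw [dist_eq_norm, sub_sub_cancel_left, norm_neg, norm_smul, Real.norm_of_nonneg hs.le,
        div_mul_eq_mul_div, div_lt_iff₀ (by positivity)]
      linarith
    linarith [(abs_lt.1 (hball hzδ)).2]
  have hzw : z + (s / (1 + s)) • (v - z) = w := by
    match_scalars <;> field_simp <;> ring
  have h := hφ.le_add_smul_sub z v (t := s / (1 + s))
    ⟨by positivity, by rw [div_le_one (by positivity)]; linarith⟩
  rw [hzw] at h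
  have hinv : 1 / s = 1 / δ + 1 / δ * ‖v - w‖ := by
    simp only [s]
    field_simp
    ring
  have h' : (1 + s) * φ w ≤ φ z + s * φ v :=
    calc (1 + s) * φ w ≤ (1 + s) * (φ z + s / (1 + s) * (φ v - φ z)) := by gcongr
      _ = φ z + s * φ v := by field_simp; ring
  have : φ w - φ v ≤ 1 / s := by
    rw [le_div_iff₀ hs]
    linarith
  linarith

theorem exists_isMinOn_of_midpoint_le [CompleteSpace E] {K : Set E} (hKne : K.Nonempty)
    (hKcl : IsClosed K) (hKcv : Convex ℝ K) {g : E → ℝ} (hg : Continuous g)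
    (hbdd : BddBelow (g '' K)) {c : ℝ} (hc : 0 < c)
    (hmid : ∀ p ∈ K, ∀ q ∈ K, g (midpoint ℝ p q) + c * ‖p - q‖ ^ 2 ≤ (g p + g q) / 2) :
    ∃ u ∈ K, IsMinOn g K u := by
  obtain ⟨s, -, hs, hsK⟩ := exists_seq_tendsto_sInf (hKne.image g) hbdd
  choose x hxK hxs using hsK
  have hlow : ∀ p ∈ K, sInf (g '' K) ≤ g p := fun p hp => csInf_le hbdd ⟨p, hp, rfl⟩
  have hgx : Tendsto (fun n => g (x n)) atTop (𝓝 (sInf (g '' K))) := by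
    simpa only [hxs] using hs
  -- a minimizing sequence is Cauchy, since `c ‖p - q‖²` is bounded by the excess of `g`
  have hcauchy : CauchySeq x := by
    refine Metric.cauchySeq_iff.2 fun ε hε => ?_
    obtain ⟨N, hN⟩ := eventually_atTop.1
      (hgx.eventually (gt_mem_nhds (lt_add_of_pos_right _ (by positivity : 0 < c * ε ^ 2))))
    refine ⟨N, fun p hp q hq => ?_⟩
    have h := hmid _ (hxK p) _ (hxK q)
    have hm := hlow _ (hKcv.midpoint_mem (hxK p) (hxK q))
    have hsq : c * ‖x p - x q‖ ^ 2 < c * ε ^ 2 := by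
      linarith [hN p hp, hN q hq]
    rw [dist_eq_norm]
    exact lt_of_pow_lt_pow_left₀ 2 hε.le (lt_of_mul_lt_mul_left hsq hc.le)
  obtain ⟨u, hu⟩ := cauchySeq_tendsto_of_complete hcauchy
  have hgu : g u = sInf (g '' K) := tendsto_nhds_unique ((hg.tendsto u).comp hu) hgx
  exact ⟨u, hKcl.mem_of_tendsto hu (Eventually.of_forall hxK), fun v hv => hgu ▸ hlow v hv⟩

end Convex

section Clarke

variable {X : Type*} [NormedAddCommGroup X] [NormedSpace ℝ X] {f g : X → ℝ} {u v : X}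

noncomputable def clarkeQuotient (f : X → ℝ) (v : X) (p : X × ℝ) : ℝ :=
  (f (p.1 + p.2 • v) - f p.1) / p.2

theorem clarkeDeriv_eq_limsup (f : X → ℝ) (u v : X) :
    clarkeDeriv f u v = limsup (clarkeQuotient f v) (𝓝 u ×ˢ 𝓝[>] 0) := rfl

theorem tendsto_fst_add_snd_smul (u v : X) :
    Tendsto (fun p : X × ℝ => p.1 + p.2 • v) (𝓝 u ×ˢ 𝓝[>] 0) (𝓝 u) := by
  have hc : Continuous fun p : X × ℝ => p.1 + p.2 • v := by fun_prop
  have h := hc.tendsto' (u, 0) u (by simp)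
  rw [nhds_prod_eq] at h
  exact h.mono_left (prod_mono le_rfl nhdsWithin_le_nhds)

theorem LocallyLipschitz.exists_eventually_abs_clarkeQuotient_le (hf : LocallyLipschitz f)
    (u v : X) : ∃ C, ∀ᶠ p in 𝓝 u ×ˢ 𝓝[>] 0, |clarkeQuotient f v p| ≤ C := by
  obtain ⟨L, s, hs, hLs⟩ := hf u
  refine ⟨L * ‖v‖, ?_⟩
  filter_upwards [tendsto_fst.eventually_mem hs, (tendsto_fst_add_snd_smul u v).eventually_mem hs,
    tendsto_snd.eventually (self_mem_nhdsWithin : Ioi (0 : ℝ) ∈ 𝓝[>] 0)] with p hp hpv hp0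
  have ht : (0 : ℝ) < p.2 := hp0
  have := hLs.dist_le_mul _ hpv _ hp
  rw [Real.dist_eq, dist_eq_norm, add_sub_cancel_left, norm_smul, Real.norm_of_nonneg ht.le]
    at this
  rw [clarkeQuotient, abs_div, abs_of_pos ht, div_le_iff₀ ht]
  linarith

theorem LocallyLipschitz.clarkeDeriv_add_le (hf : LocallyLipschitz f) (hg : LocallyLipschitz g)
    (u v : X) : clarkeDeriv (fun x => f x + g x) u v ≤ clarkeDeriv f u v + clarkeDeriv g u v := by
  obtain ⟨C, hC⟩ := hf.exists_eventually_abs_clarkeQuotient_le u v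
  obtain ⟨D, hD⟩ := hg.exists_eventually_abs_clarkeQuotient_le u v
  have hsum : clarkeQuotient (fun x => f x + g x) v = clarkeQuotient f v + clarkeQuotient g v := by
    ext p
    simp only [clarkeQuotient, Pi.add_apply]
    ring
  rw [clarkeDeriv_eq_limsup, hsum]
  exact limsup_add_le (isBoundedUnder_of_eventually_ge (hC.mono fun _ h => (abs_le.1 h).1))
    (isBoundedUnder_of_eventually_le (hC.mono fun _ h => (abs_le.1 h).2))
    (isCoboundedUnder_le_of_eventually_le _ (hD.mono fun _ h => (abs_le.1 h).1))
    (isBoundedUnder_of_eventually_le (hD.mono fun _ h => (abs_le.1 h).2))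

theorem LocallyLipschitz.limsup_clarkeQuotient_comp_le {ι : Type*} {G : Filter ι} [G.NeBot]
    {m : ι → X × ℝ} (hf : LocallyLipschitz f) (hm : Tendsto m G (𝓝 u ×ˢ 𝓝[>] 0)) :
    limsup (clarkeQuotient f v ∘ m) G ≤ clarkeDeriv f u v := by
  obtain ⟨C, hC⟩ := hf.exists_eventually_abs_clarkeQuotient_le u v
  rw [limsup_comp]
  exact limsup_le_limsup_of_le hm
    (isCoboundedUnder_le_of_eventually_le _ (hm.eventually hC |>.mono fun _ h => (abs_le.1 h).1))
    (isBoundedUnder_of_eventually_le (hC.mono fun _ h => (abs_le.1 h).2))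

theorem LocallyLipschitz.le_clarkeDeriv_of_tendsto {ι : Type*} {G : Filter ι} [G.NeBot]
    {m : ι → X × ℝ} {c : ℝ} (hf : LocallyLipschitz f) (hm : Tendsto m G (𝓝 u ×ˢ 𝓝[>] 0))
    (hc : ∀ᶠ y in G, c ≤ clarkeQuotient f v (m y)) : c ≤ clarkeDeriv f u v := by
  obtain ⟨C, hC⟩ := hf.exists_eventually_abs_clarkeQuotient_le u v
  refine le_trans ?_ (hf.limsup_clarkeQuotient_comp_le hm)
  exact le_limsup_of_frequently_le hc.frequently
    (isBoundedUnder_of_eventually_le (hm.eventually hC |>.mono fun _ h => (abs_le.1 h).2))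

theorem HasStrictFDerivAt.clarkeDeriv_eq {f' : X →L[ℝ] ℝ} (hf : HasStrictFDerivAt f f' u)
    (v : X) : clarkeDeriv f u v = f' v := by
  have hm : Tendsto (fun p : X × ℝ => (p.1 + p.2 • v, p.1)) (𝓝 u ×ˢ 𝓝[>] 0) (𝓝 (u, u)) :=
    (tendsto_fst_add_snd_smul u v).prodMk_nhds tendsto_fst
  have ho : (fun p : X × ℝ => f (p.1 + p.2 • v) - f p.1 - p.2 * f' v) =o[𝓝 u ×ˢ 𝓝[>] 0]
      fun p => p.2 := by
    have := (hf.isLittleO.comp_tendsto hm).trans_isBigO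
      (Asymptotics.isBigO_of_le' (c := ‖v‖) (𝓝 u ×ˢ 𝓝[>] 0) (g := fun p : X × ℝ => p.2)
        fun p => by simp [norm_smul, mul_comm])
    simpa [Function.comp_def, map_smul] using this
  rw [clarkeDeriv_eq_limsup]
  refine Tendsto.limsup_eq ?_
  have h := ho.tendsto_div_nhds_zero.add_const (f' v)
  rw [zero_add] at h
  refine h.congr' ?_
  filter_upwards [tendsto_snd.eventually (self_mem_nhdsWithin : Ioi (0 : ℝ) ∈ 𝓝[>] 0)] with p hp
  have : p.2 ≠ 0 := ne_of_gt hp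
  simp only [clarkeQuotient]
  field_simp
  ring

theorem LocallyLipschitz.clarkeDeriv_nonneg_of_isLocalExtr (hf : LocallyLipschitz f)
    (hu : IsLocalExtr f u) (v : X) : 0 ≤ clarkeDeriv f u v := by
  have hpos : ∀ᶠ t in 𝓝[>] (0 : ℝ), 0 < t := self_mem_nhdsWithin
  have hline : ∀ w : X, Tendsto (fun t : ℝ => u + t • w) (𝓝[>] 0) (𝓝 u) := fun w => by
    have hc : Continuous fun t : ℝ => u + t • w := by fun_prop
    exact (hc.tendsto' 0 u (by simp)).mono_left nhdsWithin_le_nhds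
  rcases hu with hmin | hmax
  · refine hf.le_clarkeDeriv_of_tendsto (m := fun t => (u, t))
      (tendsto_const_nhds.prodMk tendsto_id) ?_
    filter_upwards [(hline v).eventually hmin, hpos] with t ht ht0
    exact div_nonneg (sub_nonneg.2 ht) ht0.le
  · -- at a maximum, base the quotients at `u - t • v`, so that they end at `u`
    refine hf.le_clarkeDeriv_of_tendsto (m := fun t => (u + t • -v, t))
      ((hline (-v)).prodMk tendsto_id) ?_
    filter_upwards [(hline (-v)).eventually hmax, hpos] with t ht ht0
    rw [smul_neg] at ht
    simp only [clarkeQuotient, smul_neg, neg_add_cancel_right]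
    exact div_nonneg (sub_nonneg.2 ht) ht0.le

theorem LocallyLipschitz.add_clarkeDeriv_nonneg_of_variational {K : Set X} (hK : Convex ℝ K)
    (huK : u ∈ K) {Φ : X → ℝ} (hΦ : ConvexOn ℝ univ Φ) (hg : LocallyLipschitz g)
    {ℓ : X →L[ℝ] ℝ} (hu : ∀ w ∈ K, 0 ≤ ℓ (w - u) + ((Φ + g) w - (Φ + g) u)) (hv : v ∈ K) :
    0 ≤ ℓ (v - u) + (Φ v - Φ u) + clarkeDeriv g u (v - u) := by
  have hc : ∀ t ∈ Ioc (0 : ℝ) 1,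
      -(ℓ (v - u) + (Φ v - Φ u)) ≤ clarkeQuotient g (v - u) (u, t) := fun t ht => by
    have h := hu _ (hK.add_smul_sub_mem huK hv (Ioc_subset_Icc_self ht))
    have hΦt := hΦ.le_add_smul_sub u v (Ioc_subset_Icc_self ht)
    rw [add_sub_cancel_left, map_smul, smul_eq_mul, Pi.add_apply, Pi.add_apply] at h
    rw [clarkeQuotient, le_div_iff₀ ht.1]
    linarith
  linarith [hg.le_clarkeDeriv_of_tendsto (m := fun t : ℝ => (u, t))
    (tendsto_const_nhds.prodMk tendsto_id) (eventually_of_mem (Ioc_mem_nhdsGT one_pos) hc)]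

end Clarke

theorem LocallyLipschitz.exists_slope_mul_le_clarkeDeriv {φ : ℝ → ℝ} (hφ : LocallyLipschitz φ)
    {a b : ℝ} (hab : a < b) : ∃ ζ ∈ Ioo a b, ∀ s, slope φ a b * s ≤ clarkeDeriv φ ζ s := by
  set μ := slope φ a b
  have hlin : LocallyLipschitz fun x : ℝ => -μ * x :=
    (contDiff_const.mul contDiff_id : ContDiff ℝ 1 _).locallyLipschitz
  have hend : φ a + -μ * a = φ b + -μ * b := by
    have := sub_smul_slope φ a b
    simp only [smul_eq_mul, vsub_eq_sub] at this
    linarith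
  obtain ⟨ζ, hζ, hext⟩ := exists_isLocalExtr_Ioo hab (hφ.add hlin).continuous.continuousOn hend
  refine ⟨ζ, hζ, fun s => ?_⟩
  have h0 := (hφ.add hlin).clarkeDeriv_nonneg_of_isLocalExtr hext s
  have hsub := hφ.clarkeDeriv_add_le hlin ζ s
  have hderiv : HasStrictDerivAt (fun x : ℝ => -μ * x) (-μ) ζ := by
    simpa using (hasStrictDerivAt_id ζ).const_mul (-μ)
  rw [hderiv.hasStrictFDerivAt.clarkeDeriv_eq] at hsub
  simp only [ContinuousLinearMap.toSpanSingleton_apply, smul_eq_mul] at hsub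
  linarith

theorem LocallyLipschitz.convexOn_univ_real_of_clarkeDeriv {φ : ℝ → ℝ} (hφ : LocallyLipschitz φ)
    (hmono : ∀ s t, clarkeDeriv φ s (t - s) + clarkeDeriv φ t (s - t) ≤ 0) :
    ConvexOn ℝ univ φ := by
  refine convexOn_of_slope_mono_adjacent convex_univ fun {x y z} _ _ hxy hyz => ?_
  obtain ⟨ζ₁, hζ₁, h₁⟩ := hφ.exists_slope_mul_le_clarkeDeriv hxy
  obtain ⟨ζ₂, hζ₂, h₂⟩ := hφ.exists_slope_mul_le_clarkeDeriv hyz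
  have hsum : (slope φ x y - slope φ y z) * (ζ₂ - ζ₁) ≤ 0 := by
    linarith [h₁ (ζ₂ - ζ₁), h₂ (ζ₁ - ζ₂), hmono ζ₁ ζ₂]
  rw [← slope_def_field, ← slope_def_field]
  nlinarith [hζ₁.2, hζ₂.1]

section Lines

variable {X : Type*} [NormedAddCommGroup X] [NormedSpace ℝ X] {g : X → ℝ}

theorem LocallyLipschitz.clarkeDeriv_comp_line_le (hg : LocallyLipschitz g) (x e : X)
    (s r : ℝ) :
    clarkeDeriv (fun τ : ℝ => g (x + τ • e)) s r ≤ clarkeDeriv g (x + s • e) (r • e) := by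
  have hm : Tendsto (fun p : ℝ × ℝ => (x + p.1 • e, p.2)) (𝓝 s ×ˢ 𝓝[>] 0)
      (𝓝 (x + s • e) ×ˢ 𝓝[>] 0) :=
    (((by fun_prop : Continuous fun τ : ℝ => x + τ • e).tendsto s).comp tendsto_fst).prodMk
      tendsto_snd
  convert hg.limsup_clarkeQuotient_comp_le (v := r • e) hm using 1
  refine congrArg (limsup · _) (funext fun p => ?_)
  simp [clarkeQuotient, add_smul, mul_smul, add_assoc]

theorem LocallyLipschitz.convexOn_univ_of_clarkeDeriv (hg : LocallyLipschitz g)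
    (hmono : ∀ x y, clarkeDeriv g x (y - x) + clarkeDeriv g y (x - y) ≤ 0) :
    ConvexOn ℝ univ g := by
  refine ⟨convex_univ, fun x _ y _ a b ha hb hab => ?_⟩
  have hφ : LocallyLipschitz fun τ : ℝ => g (x + τ • (y - x)) :=
    hg.comp (ContDiff.locallyLipschitz (𝕂 := ℝ) (by fun_prop))
  have hφmono : ∀ s t : ℝ, clarkeDeriv (fun τ : ℝ => g (x + τ • (y - x))) s (t - s) +
      clarkeDeriv (fun τ : ℝ => g (x + τ • (y - x))) t (s - t) ≤ 0 := fun s t => by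
    have h := hmono (x + s • (y - x)) (x + t • (y - x))
    rw [add_sub_add_left_eq_sub, ← sub_smul, add_sub_add_left_eq_sub, ← sub_smul] at h
    exact (add_le_add (hg.clarkeDeriv_comp_line_le ..) (hg.clarkeDeriv_comp_line_le ..)).trans h
  have h := (hφ.convexOn_univ_real_of_clarkeDeriv hφmono).2 (mem_univ 0) (mem_univ 1) ha hb hab
  obtain rfl : a = 1 - b := by linarith
  convert h using 2 <;> simp
  module

end Lines

section Hilbert

open RealInnerProductSpace

variable {V : Type*} [NormedAddCommGroup V] [InnerProductSpace ℝ V] {Ψ : V → ℝ}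

theorem locallyLipschitz_const_mul_norm_sq (c : ℝ) : LocallyLipschitz fun x : V => c * ‖x‖ ^ 2 :=
  ContDiff.locallyLipschitz (𝕂 := ℝ) (contDiff_const.mul (contDiff_norm_sq ℝ))

theorem LocallyLipschitz.clarkeDeriv_add_half_mul_norm_sq_le (hΨ : LocallyLipschitz Ψ)
    (α : ℝ) (u v : V) :
    clarkeDeriv (fun x => Ψ x + α / 2 * ‖x‖ ^ 2) u v ≤ clarkeDeriv Ψ u v + α * ⟪u, v⟫ := by
  have h := hΨ.clarkeDeriv_add_le (locallyLipschitz_const_mul_norm_sq (α / 2)) u v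
  rw [((hasStrictFDerivAt_norm_sq u).const_mul (α / 2)).clarkeDeriv_eq] at h
  convert h using 2
  simp only [_root_.smul_apply, coe_innerSL_apply, nsmul_eq_mul, Nat.cast_ofNat, smul_eq_mul]
  ring

theorem LocallyLipschitz.convexOn_add_half_mul_norm_sq (hΨ : LocallyLipschitz Ψ) {α : ℝ}
    (hmon : ∀ x y, clarkeDeriv Ψ x (y - x) + clarkeDeriv Ψ y (x - y) ≤ α * ‖x - y‖ ^ 2) :
    ConvexOn ℝ univ fun x => Ψ x + α / 2 * ‖x‖ ^ 2 := by
  refine (hΨ.add (locallyLipschitz_const_mul_norm_sq _)).convexOn_univ_of_clarkeDeriv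
    fun x y => ?_
  have hinner : α * ⟪x, y - x⟫ + α * ⟪y, x - y⟫ = -(α * ‖x - y‖ ^ 2) := by
    rw [← real_inner_self_eq_norm_sq, ← neg_sub x y, inner_neg_right, inner_sub_left]
    ring
  linarith [hΨ.clarkeDeriv_add_half_mul_norm_sq_le α x (y - x),
    hΨ.clarkeDeriv_add_half_mul_norm_sq_le α y (x - y), hmon x y]

end Hilbert

section Prox

open RealInnerProductSpace

variable {V : Type*} [NormedAddCommGroup V] [InnerProductSpace ℝ V] {K : Set V} {φ : V → ℝ}

/-- The variational characterisation of `u = argmin_{v ∈ K} (‖v - w‖² / 2 + φ v)`. -/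
def IsProxPoint (K : Set V) (φ : V → ℝ) (w u : V) : Prop :=
  u ∈ K ∧ ∀ v ∈ K, 0 ≤ ⟪u - w, v - u⟫ + (φ v - φ u)

theorem IsMinOn.isProxPoint (hKcv : Convex ℝ K) (hφ : ConvexOn ℝ univ φ) {w u : V}
    (huK : u ∈ K) (hmin : IsMinOn (fun v => ‖v - w‖ ^ 2 / 2 + φ v) K u) :
    IsProxPoint K φ w u := by
  refine ⟨huK, fun v hv => ?_⟩
  set X := ⟪u - w, v - u⟫ + (φ v - φ u)
  have hstep : ∀ t ∈ Ioc (0 : ℝ) 1, 0 ≤ X + t / 2 * ‖v - u‖ ^ 2 := fun t ht => by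
    have hmin_t := hmin (hKcv.add_smul_sub_mem huK hv (Ioc_subset_Icc_self ht))
    have hφt := hφ.le_add_smul_sub u v (Ioc_subset_Icc_self ht)
    simp only [mem_ofPred_eq] at hmin_t
    rw [add_sub_right_comm, norm_add_sq_real, real_inner_smul_right, norm_smul,
      Real.norm_of_nonneg ht.1.le] at hmin_t
    nlinarith [ht.1]
  have hlim : Tendsto (fun t : ℝ => X + t / 2 * ‖v - u‖ ^ 2) (𝓝[>] 0) (𝓝 X) := by
    have hc : Continuous fun t : ℝ => X + t / 2 * ‖v - u‖ ^ 2 := by fun_prop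
    simpa using (hc.tendsto 0).mono_left nhdsWithin_le_nhds
  exact ge_of_tendsto hlim (eventually_of_mem (Ioc_mem_nhdsGT one_pos) hstep)

theorem exists_isProxPoint [CompleteSpace V] (hKne : K.Nonempty) (hKcl : IsClosed K)
    (hKcv : Convex ℝ K) (hφ : ConvexOn ℝ univ φ) (hφc : Continuous φ) (w : V) :
    ∃ u, IsProxPoint K φ w u := by
  obtain ⟨c, d, hd, hcd⟩ := hφ.exists_sub_mul_norm_sub_le hφc.continuousAt (w := w)
  have hbdd : BddBelow ((fun v => ‖v - w‖ ^ 2 / 2 + φ v) '' K) := by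
    refine ⟨c - d ^ 2 / 2, ?_⟩
    rintro _ ⟨v, -, rfl⟩
    nlinarith [hcd v, sq_nonneg (‖v - w‖ - d)]
  have hmid : ∀ p ∈ K, ∀ q ∈ K, ‖midpoint ℝ p q - w‖ ^ 2 / 2 + φ (midpoint ℝ p q) +
      1 / 8 * ‖p - q‖ ^ 2 ≤ (‖p - w‖ ^ 2 / 2 + φ p + (‖q - w‖ ^ 2 / 2 + φ q)) / 2 := by
    intro p _ q _
    have hpar := parallelogram_law_with_norm ℝ (p - w) (q - w)
    have hmw : (p - w) + (q - w) = (2 : ℝ) • (midpoint ℝ p q - w) := by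
      rw [midpoint_eq_smul_add, invOf_eq_inv]
      module
    rw [hmw, norm_smul, sub_sub_sub_cancel_right, Real.norm_two] at hpar
    have hφm : φ (midpoint ℝ p q) ≤ (φ p + φ q) / 2 := by
      have := hφ.2 (mem_univ p) (mem_univ q) (by norm_num : (0 : ℝ) ≤ 1 / 2)
        (by norm_num : (0 : ℝ) ≤ 1 / 2) (by norm_num)
      rw [midpoint_eq_smul_add, invOf_eq_inv, smul_add, ← one_div]
      simp only [smul_eq_mul] at this
      linarith
    nlinarith
  obtain ⟨u, huK, hmin⟩ := exists_isMinOn_of_midpoint_le hKne hKcl hKcv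
    (by fun_prop) hbdd (by norm_num) hmid
  exact ⟨u, hmin.isProxPoint hKcv hφ huK⟩

theorem IsProxPoint.norm_sub_le {w₁ w₂ u₁ u₂ : V} (h₁ : IsProxPoint K φ w₁ u₁)
    (h₂ : IsProxPoint K φ w₂ u₂) : ‖u₁ - u₂‖ ≤ ‖w₁ - w₂‖ := by
  have hsum : ‖u₁ - u₂‖ ^ 2 ≤ ⟪w₁ - w₂, u₁ - u₂⟫ := by
    have h := add_nonneg (h₁.2 u₂ h₂.1) (h₂.2 u₁ h₁.1)
    rw [← real_inner_self_eq_norm_sq]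
    simp only [inner_sub_left, inner_sub_right, real_inner_comm] at h ⊢
    linarith
  have hcs := real_inner_le_norm (w₁ - w₂) (u₁ - u₂)
  nlinarith [norm_nonneg (u₁ - u₂), norm_nonneg (w₁ - w₂)]

theorem norm_sub_smul_le {x y : V} {m L ρ : ℝ} (hm : m * ‖x‖ ^ 2 ≤ ⟪y, x⟫)
    (hL : ‖y‖ ≤ L * ‖x‖) (hρ : 0 ≤ ρ) :
    ‖x - ρ • y‖ ≤ √(1 - 2 * ρ * m + ρ ^ 2 * L ^ 2) * ‖x‖ := by
  have hsq : ‖x - ρ • y‖ ^ 2 ≤ (1 - 2 * ρ * m + ρ ^ 2 * L ^ 2) * ‖x‖ ^ 2 := by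
    rw [norm_sub_sq_real, real_inner_smul_right, norm_smul, Real.norm_of_nonneg hρ,
      real_inner_comm]
    have hy : ‖y‖ ^ 2 ≤ (L * ‖x‖) ^ 2 := pow_le_pow_left₀ (norm_nonneg y) hL 2
    nlinarith [mul_le_mul_of_nonneg_left hm hρ, mul_le_mul_of_nonneg_left hy (sq_nonneg ρ)]
  calc ‖x - ρ • y‖ = √(‖x - ρ • y‖ ^ 2) := (Real.sqrt_sq (norm_nonneg _)).symm
    _ ≤ √((1 - 2 * ρ * m + ρ ^ 2 * L ^ 2) * ‖x‖ ^ 2) := Real.sqrt_le_sqrt hsq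
    _ = √(1 - 2 * ρ * m + ρ ^ 2 * L ^ 2) * ‖x‖ := by
      rw [Real.sqrt_mul' _ (sq_nonneg _), Real.sqrt_sq (norm_nonneg _)]

end Prox

section VariationalInequality

open RealInnerProductSpace

variable {V : Type*} [NormedAddCommGroup V] [InnerProductSpace ℝ V]

theorem exists_solution_variationalInequality [CompleteSpace V] {K : Set V} (hKne : K.Nonempty)
    (hKcl : IsClosed K) (hKcv : Convex ℝ K) {B : V → V →L[ℝ] ℝ} {L m : ℝ} (hL : 0 < L)
    (hBlip : ∀ v₁ v₂, ‖B v₁ - B v₂‖ ≤ L * ‖v₁ - v₂‖) (hm : 0 < m)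
    (hBmon : ∀ v₁ v₂, m * ‖v₁ - v₂‖ ^ 2 ≤ (B v₁ - B v₂) (v₁ - v₂)) {φ : V → ℝ}
    (hφ : ConvexOn ℝ univ φ) (hφc : Continuous φ) (f : V →L[ℝ] ℝ) :
    ∃ u ∈ K, ∀ v ∈ K, 0 ≤ (B u - f) (v - u) + (φ v - φ u) := by
  set ρ := m / L ^ 2
  have hρ : 0 < ρ := by positivity
  set R : V → V := fun z => (InnerProductSpace.toDual ℝ V).symm (B z - f)
  choose P hP using exists_isProxPoint hKne hKcl hKcv (hφ.smul hρ.le) (by fun_prop)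
  set r := 1 - 2 * ρ * m + ρ ^ 2 * L ^ 2
  have hr : r < 1 := by
    have : ρ ^ 2 * L ^ 2 = ρ * m := by simp only [ρ]; field_simp
    nlinarith
  have hR : ∀ z₁ z₂, R z₁ - R z₂ = (InnerProductSpace.toDual ℝ V).symm (B z₁ - B z₂) :=
    fun z₁ z₂ => by simp only [R, ← map_sub, sub_sub_sub_cancel_right]
  have hstep : ∀ z₁ z₂, ‖(z₁ - ρ • R z₁) - (z₂ - ρ • R z₂)‖ ≤ √r * ‖z₁ - z₂‖ := by
    intro z₁ z₂
    rw [sub_sub_sub_comm, ← smul_sub]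
    refine norm_sub_smul_le ?_ ?_ hρ.le
    · rw [hR, InnerProductSpace.toDual_symm_apply]
      exact hBmon z₁ z₂
    · rw [hR, LinearIsometryEquiv.norm_map]
      exact hBlip z₁ z₂
  have hcontr : ContractingWith ⟨√r, Real.sqrt_nonneg r⟩ fun z => P (z - ρ • R z) := by
    refine ⟨NNReal.coe_lt_coe.1 ((Real.sqrt_lt' one_pos).2 (by linarith)), ?_⟩
    refine LipschitzWith.of_dist_le_mul fun z₁ z₂ => ?_
    rw [dist_eq_norm, dist_eq_norm]
    exact ((hP _).norm_sub_le (hP _)).trans (hstep z₁ z₂)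
  set u := ContractingWith.fixedPoint _ hcontr
  have hfix : P (u - ρ • R u) = u := hcontr.fixedPoint_isFixedPt
  obtain ⟨huK, hu⟩ := hP (u - ρ • R u)
  rw [hfix] at huK hu
  refine ⟨u, huK, fun v hv => ?_⟩
  have h := hu v hv
  rw [sub_sub_cancel, real_inner_smul_left, InnerProductSpace.toDual_symm_apply] at h
  simp only [smul_eq_mul, ← mul_sub, ← mul_add] at h
  exact nonneg_of_mul_nonneg_right h hρ

theorem sub_smul_innerSL_sub_sub_smul_innerSL (A : V → V →L[ℝ] ℝ) (α : ℝ) (v₁ v₂ : V) :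
    (A v₁ - α • innerSL ℝ v₁) - (A v₂ - α • innerSL ℝ v₂) =
      (A v₁ - A v₂) - α • innerSL ℝ (v₁ - v₂) := by
  rw [map_sub, smul_sub]
  abel

theorem norm_sub_smul_innerSL_sub_le {A : V → V →L[ℝ] ℝ} {L α : ℝ} (hα : 0 ≤ α)
    (hA : ∀ v₁ v₂, ‖A v₁ - A v₂‖ ≤ L * ‖v₁ - v₂‖) (v₁ v₂ : V) :
    ‖(A v₁ - α • innerSL ℝ v₁) - (A v₂ - α • innerSL ℝ v₂)‖ ≤ (L + α) * ‖v₁ - v₂‖ := by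
  rw [sub_smul_innerSL_sub_sub_smul_innerSL]
  calc _ ≤ ‖A v₁ - A v₂‖ + ‖α • innerSL ℝ (v₁ - v₂)‖ := norm_sub_le _ _
    _ ≤ L * ‖v₁ - v₂‖ + α * ‖v₁ - v₂‖ := by
      rw [norm_smul, innerSL_apply_norm, Real.norm_of_nonneg hα]
      exact add_le_add_left (hA v₁ v₂) _
    _ = (L + α) * ‖v₁ - v₂‖ := by ring

theorem le_apply_sub_smul_innerSL {A : V → V →L[ℝ] ℝ} {m : ℝ}
    (hA : ∀ v₁ v₂, m * ‖v₁ - v₂‖ ^ 2 ≤ (A v₁ - A v₂) (v₁ - v₂)) (α : ℝ) (v₁ v₂ : V) :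
    (m - α) * ‖v₁ - v₂‖ ^ 2 ≤
      ((A v₁ - α • innerSL ℝ v₁) - (A v₂ - α • innerSL ℝ v₂)) (v₁ - v₂) := by
  rw [sub_smul_innerSL_sub_sub_smul_innerSL, sub_apply, _root_.smul_apply,
    innerSL_apply_apply, real_inner_self_eq_norm_sq, smul_eq_mul]
  linarith [hA v₁ v₂]

theorem eq_of_hemivariational_solutions {A : V → V →L[ℝ] ℝ} {Φ Ψ : V → ℝ} {f : V →L[ℝ] ℝ}
    {m α : ℝ} (hα : α < m) (hA : ∀ v₁ v₂, m * ‖v₁ - v₂‖ ^ 2 ≤ (A v₁ - A v₂) (v₁ - v₂))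
    (hΨ : ∀ v₁ v₂, clarkeDeriv Ψ v₁ (v₂ - v₁) + clarkeDeriv Ψ v₂ (v₁ - v₂) ≤ α * ‖v₁ - v₂‖ ^ 2)
    {u₁ u₂ : V} (h₁ : f (u₂ - u₁) ≤ A u₁ (u₂ - u₁) + Φ u₂ - Φ u₁ + clarkeDeriv Ψ u₁ (u₂ - u₁))
    (h₂ : f (u₁ - u₂) ≤ A u₂ (u₁ - u₂) + Φ u₁ - Φ u₂ + clarkeDeriv Ψ u₂ (u₁ - u₂)) :
    u₁ = u₂ := by
  have hneg : ∀ ℓ : V →L[ℝ] ℝ, ℓ (u₂ - u₁) = -ℓ (u₁ - u₂) := fun ℓ => by rw [← map_neg, neg_sub]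
  have hA₁₂ := hA u₁ u₂
  rw [sub_apply] at hA₁₂
  have hsq : (m - α) * ‖u₁ - u₂‖ ^ 2 ≤ 0 := by
    linarith [hneg f, hneg (A u₁), hΨ u₁ u₂]
  have h0 : ‖u₁ - u₂‖ ^ 2 = 0 := le_antisymm (by nlinarith [sq_nonneg ‖u₁ - u₂‖]) (sq_nonneg _)
  exact sub_eq_zero.1 (norm_eq_zero.1 (pow_eq_zero_iff two_ne_zero |>.1 h0))

end VariationalInequality

theorem stmt9_general {V : Type*} [NormedAddCommGroup V] [InnerProductSpace ℝ V] [CompleteSpace V]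
    (K : Set V) (hKne : K.Nonempty) (hKcl : IsClosed K) (hKcv : Convex ℝ K)
    (A : V → (V →L[ℝ] ℝ)) (LA : ℝ) (hLA : 0 < LA)
    (hALip : ∀ v₁ v₂ : V, ‖A v₁ - A v₂‖ ≤ LA * ‖v₁ - v₂‖)
    (mA : ℝ)
    (hAmon : ∀ v₁ v₂ : V, (A v₁ - A v₂) (v₁ - v₂) ≥ mA * ‖v₁ - v₂‖ ^ 2)
    (Φ : V → ℝ) (hΦcv : ConvexOn ℝ Set.univ Φ) (hΦcont : Continuous Φ)
    (Ψ : V → ℝ)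
    (hΨlip : ∀ u : V, ∃ (L : NNReal) (s : Set V), s ∈ 𝓝 u ∧ LipschitzOnWith L Ψ s)
    (αΨ : ℝ) (hαΨ : 0 ≤ αΨ)
    (hΨmon : ∀ v₁ v₂ : V,
      clarkeDeriv Ψ v₁ (v₂ - v₁) + clarkeDeriv Ψ v₂ (v₁ - v₂) ≤ αΨ * ‖v₁ - v₂‖ ^ 2)
    (f : V →L[ℝ] ℝ) (hsmall : αΨ < mA) :
    ∃! u : V, u ∈ K ∧ ∀ v ∈ K,
      (A u) (v - u) + Φ v - Φ u + clarkeDeriv Ψ u (v - u) ≥ f (v - u) := by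
  have hΨ : LocallyLipschitz Ψ := hΨlip
  have hΨα : LocallyLipschitz fun x => Ψ x + αΨ / 2 * ‖x‖ ^ 2 :=
    hΨ.add (locallyLipschitz_const_mul_norm_sq _)
  obtain ⟨u, huK, hu⟩ := exists_solution_variationalInequality hKne hKcl hKcv
    (add_pos_of_pos_of_nonneg hLA hαΨ) (norm_sub_smul_innerSL_sub_le hαΨ hALip)
    (sub_pos.2 hsmall) (le_apply_sub_smul_innerSL hAmon αΨ)
    (hΦcv.add (hΨ.convexOn_add_half_mul_norm_sq hΨmon)) (hΦcont.add hΨα.continuous) f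
  have hsol : ∀ v ∈ K, (A u) (v - u) + Φ v - Φ u + clarkeDeriv Ψ u (v - u) ≥ f (v - u) := by
    intro v hv
    have h := hΨα.add_clarkeDeriv_nonneg_of_variational hKcv huK hΦcv hu hv
    simp only [sub_apply, _root_.smul_apply, innerSL_apply_apply, smul_eq_mul] at h
    linarith [hΨ.clarkeDeriv_add_half_mul_norm_sq_le αΨ u (v - u)]
  exact ⟨u, ⟨huK, hsol⟩, fun w ⟨hwK, hw⟩ =>
    eq_of_hemivariational_solutions hsmall hAmon hΨmon (hw u huK) (hsol w hwK)⟩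

theorem stmt9 {V : Type*} [NormedAddCommGroup V] [InnerProductSpace ℝ V] [CompleteSpace V]
    (K : Set V) (hKne : K.Nonempty) (hKcl : IsClosed K) (hKcv : Convex ℝ K)
    (A : V → (V →L[ℝ] ℝ)) (LA : ℝ) (hLA : 0 < LA)
    (hALip : ∀ v₁ v₂ : V, ‖A v₁ - A v₂‖ ≤ LA * ‖v₁ - v₂‖)
    (mA : ℝ) (hmA : 0 < mA)
    (hAmon : ∀ v₁ v₂ : V, (A v₁ - A v₂) (v₁ - v₂) ≥ mA * ‖v₁ - v₂‖ ^ 2)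
    (Φ : V → ℝ) (hΦcv : ConvexOn ℝ Set.univ Φ) (hΦcont : Continuous Φ)
    (Ψ : V → ℝ)
    (hΨlip : ∀ u : V, ∃ (L : NNReal) (s : Set V), s ∈ 𝓝 u ∧ LipschitzOnWith L Ψ s)
    (αΨ : ℝ) (hαΨ : 0 ≤ αΨ)
    (hΨmon : ∀ v₁ v₂ : V,
      clarkeDeriv Ψ v₁ (v₂ - v₁) + clarkeDeriv Ψ v₂ (v₁ - v₂) ≤ αΨ * ‖v₁ - v₂‖ ^ 2)
    (f : V →L[ℝ] ℝ) (hsmall : αΨ < mA) :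
    ∃! u : V, u ∈ K ∧ ∀ v ∈ K,
      (A u) (v - u) + Φ v - Φ u + clarkeDeriv Ψ u (v - u) ≥ f (v - u) :=
  stmt9_general K hKne hKcl hKcv A LA hLA hALip mA hAmon Φ hΦcv hΦcont Ψ hΨlip αΨ hαΨ hΨmon f hsmall
end
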